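/- arXiv:2003.04829 — 2 statements merged into one kernel-verified Lean document; each statement's English description precedes it below -/
import Mathlib

section
/- Let d ≥ 1 and let m, m' be Borel probability measures on ℝ^d with ∫(1+|x|) dm(x) < ∞ and ∫(1+|x|) dm'(x) < ∞. Then there exists a Borel probability measure π on ℝ^d × ℝ^d whose first marginal is m and whose second marginal is m', such that ∫_{ℝ^d×ℝ^d} |x − y| dπ(x,y) ≤ ∫_{ℝ^d} (1 + |x|) d|m − m'|(x). In particular, the 1-Wasserstein distance satisfies W₁(m, m') ≤ ‖m − m'‖_φ for φ(x) = 1 + |x|. -/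
/-!
Split `μ` and `ν` as `μ = c + p`, `ν = c + n`, where `p = μ - ν` and `n = ν - μ` form the Jordan
decomposition of `μ - ν` and `c` is their common part. Leave `c` in place on the diagonal, at no
cost, and send the excess `p` onto the deficit `n` independently, by the product `p ⊗ n`
normalised by its mass `p(E) = n(E)`. Since `‖x - y‖ ≤ ‖x‖ + ‖y‖`, the second part costs at most
`∫ ‖x‖ d(p + n) = ∫ ‖x‖ d|μ - ν|`.
-/

open MeasureTheory Set

namespace MeasureTheory.Measure

section Coupling

variable {X : Type*} [MeasurableSpace X]

/-- If `p = 0` then `(p univ)⁻¹ = ⊤`, harmless since `p.prod n = 0`. -/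
noncomputable def diagAddNormalizedProd (c p n : Measure X) : Measure (X × X) :=
  c.map Function.diag + (p univ)⁻¹ • p.prod n

variable {c p n : Measure X} [IsFiniteMeasure p] [IsFiniteMeasure n]

lemma map_fst_normalizedProd (h : n univ = p univ) :
    ((p univ)⁻¹ • p.prod n).map Prod.fst = p := by
  by_cases hp : p univ = 0
  · simp [measure_univ_eq_zero.mp hp]
  · rw [Measure.map_smul, map_fst_prod, h, smul_smul,
      ENNReal.inv_mul_cancel hp (measure_ne_top _ _), one_smul]

lemma map_snd_normalizedProd (h : n univ = p univ) :
    ((p univ)⁻¹ • p.prod n).map Prod.snd = n := by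
  by_cases hp : p univ = 0
  · simp [measure_univ_eq_zero.mp (h.trans hp)]
  · rw [Measure.map_smul, map_snd_prod, smul_smul,
      ENNReal.inv_mul_cancel hp (measure_ne_top _ _), one_smul]

lemma map_fst_diagAddNormalizedProd (h : n univ = p univ) :
    (diagAddNormalizedProd c p n).map Prod.fst = c + p := by
  rw [diagAddNormalizedProd, Measure.map_add _ _ measurable_fst, map_fst_normalizedProd h,
    map_map measurable_fst measurable_diag]
  exact congrArg (· + p) map_id

lemma map_snd_diagAddNormalizedProd (h : n univ = p univ) :
    (diagAddNormalizedProd c p n).map Prod.snd = c + n := by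
  rw [diagAddNormalizedProd, Measure.map_add _ _ measurable_snd, map_snd_normalizedProd h,
    map_map measurable_snd measurable_diag]
  exact congrArg (· + n) map_id

end Coupling

lemma lintegral_enorm_sub_le_lintegral_map_fst_add_map_snd {E : Type*} [SeminormedAddCommGroup E]
    [MeasurableSpace E] [OpensMeasurableSpace E] (π : Measure (E × E)) :
    ∫⁻ z, ‖z.1 - z.2‖ₑ ∂π ≤ ∫⁻ x, ‖x‖ₑ ∂(π.map Prod.fst) + ∫⁻ y, ‖y‖ₑ ∂(π.map Prod.snd) := by
  rw [lintegral_map measurable_enorm measurable_fst, lintegral_map measurable_enorm measurable_snd,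
    ← lintegral_add_left measurable_fst.enorm]
  exact lintegral_mono fun z ↦ enorm_sub_le

lemma lintegral_enorm_sub_diagAddNormalizedProd_le {E : Type*} [SeminormedAddCommGroup E]
    [MeasurableSpace E] [OpensMeasurableSpace E] {c p n : Measure E} [IsFiniteMeasure p]
    [IsFiniteMeasure n] (h : n univ = p univ) :
    ∫⁻ z, ‖z.1 - z.2‖ₑ ∂(diagAddNormalizedProd c p n) ≤ ∫⁻ x, ‖x‖ₑ ∂(p + n) := by
  have hdiag : ∫⁻ z, ‖z.1 - z.2‖ₑ ∂(c.map Function.diag) = 0 :=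
    le_antisymm ((lintegral_map_le _ _).trans (by simp [Function.diag, enorm_eq_nnnorm])) bot_le
  rw [diagAddNormalizedProd, lintegral_add_measure, hdiag, zero_add, lintegral_add_measure]
  simpa only [map_fst_normalizedProd h, map_snd_normalizedProd h] using
    lintegral_enorm_sub_le_lintegral_map_fst_add_map_snd ((p univ)⁻¹ • p.prod n)

section Jordan

variable {X : Type*} [MeasurableSpace X] (μ ν : Measure X) [IsFiniteMeasure μ] [IsFiniteMeasure ν]

lemma add_sub_eq_add_sub_rev : μ + (ν - μ) = ν + (μ - ν) := by
  have h := sub_toSignedMeasure_eq_toSignedMeasure_sub (μ := μ) (ν := ν)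
  rw [sub_eq_sub_iff_add_eq_add] at h
  rw [← toSignedMeasure_eq_toSignedMeasure_iff, toSignedMeasure_add, toSignedMeasure_add, h,
    add_comm]

lemma sub_sub_self_add_sub_rev : μ - (μ - ν) + (ν - μ) = ν := by
  calc μ - (μ - ν) + (ν - μ) = μ - (μ - ν) + (ν - μ) + (μ - ν) - (μ - ν) :=
        Measure.add_sub_cancel.symm
    _ = μ + (ν - μ) - (μ - ν) := by rw [add_right_comm, sub_add_cancel_of_le sub_le]
    _ = ν := by rw [add_sub_eq_add_sub_rev, Measure.add_sub_cancel]

lemma measure_univ_sub_rev_eq (h : μ univ = ν univ) : (ν - μ) univ = (μ - ν) univ := by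
  have key := congrArg (· univ) (add_sub_eq_add_sub_rev μ ν)
  simp only [add_apply, h] at key
  exact (ENNReal.add_right_inj (measure_ne_top ν univ)).mp key

end Jordan

theorem exists_coupling_lintegral_enorm_sub_le_totalVariation {E : Type*}
    [SeminormedAddCommGroup E] [MeasurableSpace E] [OpensMeasurableSpace E]
    (μ ν : Measure E) [IsProbabilityMeasure μ] [IsProbabilityMeasure ν] :
    ∃ π : Measure (E × E), IsProbabilityMeasure π ∧ π.map Prod.fst = μ ∧ π.map Prod.snd = ν ∧
      ∫⁻ z, ‖z.1 - z.2‖ₑ ∂π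
        ≤ ∫⁻ x, ‖x‖ₑ ∂(μ.toSignedMeasure - ν.toSignedMeasure).totalVariation := by
  have hmass : (ν - μ) univ = (μ - ν) univ := measure_univ_sub_rev_eq μ ν (by simp)
  set π := diagAddNormalizedProd (μ - (μ - ν)) (μ - ν) (ν - μ)
  have hfst : π.map Prod.fst = μ := by
    rw [map_fst_diagAddNormalizedProd hmass, sub_add_cancel_of_le sub_le]
  have hsnd : π.map Prod.snd = ν := by
    rw [map_snd_diagAddNormalizedProd hmass, sub_sub_self_add_sub_rev]
  have : IsProbabilityMeasure (π.map Prod.fst) := hfst ▸ ‹_›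
  refine ⟨π, isProbabilityMeasure_of_map Prod.fst, hfst, hsnd, ?_⟩
  rw [SignedMeasure.totalVariation, toJordanDecomposition_toSignedMeasure_sub]
  exact lintegral_enorm_sub_diagAddNormalizedProd_le hmass

end MeasureTheory.Measure

theorem stmt_7_general (d : ℕ)
    (m m' : Measure (EuclideanSpace ℝ (Fin d)))
    [IsProbabilityMeasure m] [IsProbabilityMeasure m'] :
    ∃ π : Measure (EuclideanSpace ℝ (Fin d) × EuclideanSpace ℝ (Fin d)),
      IsProbabilityMeasure π ∧ π.map Prod.fst = m ∧ π.map Prod.snd = m' ∧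
      ∫⁻ p, ENNReal.ofReal ‖p.1 - p.2‖ ∂π
        ≤ ∫⁻ x, ENNReal.ofReal (1 + ‖x‖)
            ∂((m.toSignedMeasure - m'.toSignedMeasure).totalVariation) := by
  obtain ⟨π, hπ, hfst, hsnd, hcost⟩ :=
    Measure.exists_coupling_lintegral_enorm_sub_le_totalVariation m m'
  refine ⟨π, hπ, hfst, hsnd, ?_⟩
  simp only [ofReal_norm]
  refine hcost.trans (lintegral_mono fun x ↦ ?_)
  rw [← ofReal_norm]
  exact ENNReal.ofReal_le_ofReal (le_add_of_nonneg_left zero_le_one)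

/-- For Borel probability measures `m, m'` on `ℝ^d` with finite first
moments, there is a coupling `π` of `m` and `m'` with
`∫ |x − y| dπ(x,y) ≤ ∫ (1 + |x|) d|m − m'|(x)`; in particular
`W₁(m,m') ≤ ‖m − m'‖_φ` for `φ(x) = 1 + |x|`. -/
theorem stmt_7 (d : ℕ) (hd : 1 ≤ d)
    (m m' : Measure (EuclideanSpace ℝ (Fin d)))
    [IsProbabilityMeasure m] [IsProbabilityMeasure m']
    (hm : ∫⁻ x, ENNReal.ofReal (1 + ‖x‖) ∂m < ⊤)
    (hm' : ∫⁻ x, ENNReal.ofReal (1 + ‖x‖) ∂m' < ⊤) :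
    ∃ π : Measure (EuclideanSpace ℝ (Fin d) × EuclideanSpace ℝ (Fin d)),
      IsProbabilityMeasure π ∧ π.map Prod.fst = m ∧ π.map Prod.snd = m' ∧
      ∫⁻ p, ENNReal.ofReal ‖p.1 - p.2‖ ∂π
        ≤ ∫⁻ x, ENNReal.ofReal (1 + ‖x‖)
            ∂((m.toSignedMeasure - m'.toSignedMeasure).totalVariation) :=
  stmt_7_general d m m'
end

section
/- Let d ≥ 1, λ > 0 and set φ(x) := exp(√(1+|x|²)) on ℝ^d. There exists a constant C > 0, depending only on d and λ, such that for all t ∈ (0,1], all h ∈ ℝ^d with |h| ≤ 1, and all x ∈ ℝ^d, ∫_{ℝ^d} exp(√(1 + |x − h − y|²)) ϱ_λ(t,y) dy ≤ C exp(√(1+|x|²)). Moreover |∇φ(x)| ≤ φ(x) for all x, so φ satisfies the weight condition sup_{t∈(0,1], |h|≤1} ∫ (φ + |∇φ|)(x−h−y) ϱ_λ(t,y) dy ≲_λ φ(x). -/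
open MeasureTheory

/-
The bracket `⟨z⟩ := √(1 + ‖z‖²)` is 1-Lipschitz, so `⟨x - h - y⟩ ≤ ⟨x⟩ + 1 + ‖y‖`. Young's inequality
`‖y‖ ≤ 1/(2λ) + (λ/2) ‖y‖²/t` (for `t ≤ 1`) lets half of the Gaussian decay of `ϱ_λ(t, ·)` absorb this
linear growth: the integrand is at most `exp(1 + 1/(2λ)) exp ⟨x⟩ ϱ_{λ/2}(t, y)`, and `ϱ_{λ/2}(t, ·)` has
total mass `(2π/λ)^{d/2}` for every `t`. The Lipschitz bound also gives `‖∇⟨·⟩‖ ≤ 1`, hence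
`‖∇ exp ⟨·⟩‖ ≤ exp ⟨·⟩`.
-/

noncomputable def heatKernel {V : Type*} [Norm V] (d : ℕ) (lam t : ℝ) (y : V) : ℝ :=
  t ^ (-(d : ℝ) / 2) * Real.exp (-lam * ‖y‖ ^ 2 / t)

lemma abs_sqrt_one_add_sq_sub_sqrt_one_add_sq_le (a b : ℝ) :
    |√(1 + a ^ 2) - √(1 + b ^ 2)| ≤ |a - b| := by
  set A := √(1 + a ^ 2)
  set B := √(1 + b ^ 2)
  have hA : A ^ 2 = 1 + a ^ 2 := Real.sq_sqrt (by positivity)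
  have hB : B ^ 2 = 1 + b ^ 2 := Real.sq_sqrt (by positivity)
  have haA : |a| ≤ A := Real.abs_le_sqrt (by linarith)
  have hbB : |b| ≤ B := Real.abs_le_sqrt (by linarith)
  have hAB : 0 < A + B := by positivity
  refine le_of_mul_le_mul_right ?_ hAB
  calc |A - B| * (A + B) = |a - b| * |a + b| := by
        rw [← abs_of_pos hAB, ← abs_mul, ← abs_mul]; congr 1; nlinarith
    _ ≤ |a - b| * (A + B) := by
        gcongr; exact (abs_add_le a b).trans (add_le_add haA hbB)

lemma lipschitzWith_sqrt_one_add_norm_sq {E : Type*} [SeminormedAddCommGroup E] :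
    LipschitzWith 1 (fun z : E => √(1 + ‖z‖ ^ 2)) :=
  LipschitzWith.of_dist_le_mul fun x y => by
    simpa [Real.dist_eq, dist_eq_norm] using
      (abs_sqrt_one_add_sq_sub_sqrt_one_add_sq_le ‖x‖ ‖y‖).trans (abs_norm_sub_norm_le x y)

lemma sqrt_one_add_norm_sub_sq_le {E : Type*} [SeminormedAddCommGroup E] (x y : E) :
    √(1 + ‖x - y‖ ^ 2) ≤ √(1 + ‖x‖ ^ 2) + ‖y‖ := by
  have := lipschitzWith_sqrt_one_add_norm_sq.dist_le_mul (x - y) x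
  simp only [NNReal.coe_one, one_mul, dist_eq_norm, Real.norm_eq_abs, sub_sub_cancel_left,
    norm_neg] at this
  linarith [le_abs_self (√(1 + ‖x - y‖ ^ 2) - √(1 + ‖x‖ ^ 2))]

lemma le_one_div_two_mul_add_mul_sq_div {lam t : ℝ} (hlam : 0 < lam) (ht : 0 < t) (ht1 : t ≤ 1)
    (r : ℝ) : r ≤ 1 / (2 * lam) + lam / 2 * r ^ 2 / t := by
  have hyoung : r ≤ 1 / (2 * lam) + lam / 2 * r ^ 2 := by
    have : 0 ≤ (lam * r - 1) ^ 2 / (2 * lam) := by positivity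
    have e : (lam * r - 1) ^ 2 / (2 * lam) = 1 / (2 * lam) + lam / 2 * r ^ 2 - r := by
      field_simp; ring
    linarith
  have : lam / 2 * r ^ 2 ≤ lam / 2 * r ^ 2 / t := le_div_self (by positivity) ht ht1
  linarith

section Gaussian

variable {V : Type*} [NormedAddCommGroup V] [InnerProductSpace ℝ V] [FiniteDimensional ℝ V]
  [MeasurableSpace V] [BorelSpace V]

open Module

lemma integral_heatKernel {lam t : ℝ} (hlam : 0 < lam) (ht : 0 < t) :
    ∫ y : V, heatKernel (finrank ℝ V) lam t y = (Real.pi / lam) ^ ((finrank ℝ V : ℝ) / 2) := by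
  have hrescale : ∀ y : V, -lam * ‖y‖ ^ 2 / t = -(lam / t) * ‖y‖ ^ 2 := fun y => by ring
  simp only [heatKernel, hrescale, integral_const_mul,
    GaussianFourier.integral_rexp_neg_mul_sq_norm (div_pos hlam ht)]
  rw [div_div_eq_mul_div, show Real.pi * t / lam = t * (Real.pi / lam) by ring,
    Real.mul_rpow ht.le (by positivity), ← mul_assoc, ← Real.rpow_add ht, neg_div, neg_add_cancel,
    Real.rpow_zero, one_mul]

lemma integrable_heatKernel {lam t : ℝ} (hlam : 0 < lam) (ht : 0 < t) :
    Integrable (fun y : V => heatKernel (finrank ℝ V) lam t y) :=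
  Integrable.of_integral_ne_zero (by rw [integral_heatKernel hlam ht]; positivity)

end Gaussian

lemma exp_sqrt_mul_heatKernel_le {E : Type*} [SeminormedAddCommGroup E] (d : ℕ) {lam t : ℝ}
    (hlam : 0 < lam) (ht : 0 < t) (ht1 : t ≤ 1) {h : E} (hh : ‖h‖ ≤ 1) (x y : E) :
    Real.exp √(1 + ‖x - h - y‖ ^ 2) * heatKernel d lam t y ≤
      Real.exp (1 + 1 / (2 * lam)) * Real.exp √(1 + ‖x‖ ^ 2) * heatKernel d (lam / 2) t y := by
  have hexponent : √(1 + ‖x - h - y‖ ^ 2) + -lam * ‖y‖ ^ 2 / t ≤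
      (1 + 1 / (2 * lam)) + √(1 + ‖x‖ ^ 2) + -(lam / 2) * ‖y‖ ^ 2 / t := by
    have hlip := sqrt_one_add_norm_sub_sq_le x (h + y)
    have hshift : ‖h + y‖ ≤ 1 + ‖y‖ := (norm_add_le h y).trans (by linarith)
    have hyoung := le_one_div_two_mul_add_mul_sq_div hlam ht ht1 ‖y‖
    rw [← sub_sub] at hlip
    have e1 : -lam * ‖y‖ ^ 2 / t = -(lam / 2 * ‖y‖ ^ 2 / t) - lam / 2 * ‖y‖ ^ 2 / t := by ring
    have e2 : -(lam / 2) * ‖y‖ ^ 2 / t = -(lam / 2 * ‖y‖ ^ 2 / t) := by ring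
    linarith
  unfold heatKernel
  calc Real.exp √(1 + ‖x - h - y‖ ^ 2) * (t ^ (-(d : ℝ) / 2) * Real.exp (-lam * ‖y‖ ^ 2 / t))
      = t ^ (-(d : ℝ) / 2) * Real.exp (√(1 + ‖x - h - y‖ ^ 2) + -lam * ‖y‖ ^ 2 / t) := by
        rw [Real.exp_add]; ring
    _ ≤ t ^ (-(d : ℝ) / 2) *
        Real.exp ((1 + 1 / (2 * lam)) + √(1 + ‖x‖ ^ 2) + -(lam / 2) * ‖y‖ ^ 2 / t) := by
        gcongr
    _ = _ := by rw [Real.exp_add, Real.exp_add]; ring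

open Module in
lemma integral_exp_sqrt_mul_heatKernel_le {V : Type*} [NormedAddCommGroup V] [InnerProductSpace ℝ V]
    [FiniteDimensional ℝ V] [MeasurableSpace V] [BorelSpace V] {lam t : ℝ} (hlam : 0 < lam)
    (ht : 0 < t) (ht1 : t ≤ 1) {h : V} (hh : ‖h‖ ≤ 1) (x : V) :
    ∫ y : V, Real.exp √(1 + ‖x - h - y‖ ^ 2) * heatKernel (finrank ℝ V) lam t y ≤
      Real.exp (1 + 1 / (2 * lam)) * (2 * Real.pi / lam) ^ ((finrank ℝ V : ℝ) / 2) *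
        Real.exp √(1 + ‖x‖ ^ 2) := by
  calc ∫ y : V, Real.exp √(1 + ‖x - h - y‖ ^ 2) * heatKernel (finrank ℝ V) lam t y
      ≤ ∫ y : V, Real.exp (1 + 1 / (2 * lam)) * Real.exp √(1 + ‖x‖ ^ 2) *
          heatKernel (finrank ℝ V) (lam / 2) t y :=
        integral_mono_of_nonneg (ae_of_all _ fun y => by unfold heatKernel; positivity)
          ((integrable_heatKernel (half_pos hlam) ht).const_mul _)
          (ae_of_all _ (exp_sqrt_mul_heatKernel_le _ hlam ht ht1 hh x))
    _ = _ := by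
        rw [integral_const_mul, integral_heatKernel (half_pos hlam) ht,
          show Real.pi / (lam / 2) = 2 * Real.pi / lam by ring]
        ring

lemma norm_fderiv_exp_sqrt_one_add_norm_sq_le {E : Type*} [NormedAddCommGroup E]
    [InnerProductSpace ℝ E] (x : E) :
    ‖fderiv ℝ (fun z : E => Real.exp √(1 + ‖z‖ ^ 2)) x‖ ≤ Real.exp √(1 + ‖x‖ ^ 2) := by
  have hdiff : DifferentiableAt ℝ (fun z : E => √(1 + ‖z‖ ^ 2)) x :=
    ((differentiableAt_id.norm_sq ℝ).const_add 1).sqrt (by positivity)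
  rw [fderiv_exp hdiff, norm_smul, Real.norm_of_nonneg (Real.exp_pos _).le]
  refine mul_le_of_le_one_right (Real.exp_pos _).le ?_
  simpa using norm_fderiv_le_of_lipschitz ℝ (x₀ := x) lipschitzWith_sqrt_one_add_norm_sq

theorem stmt_9_general (d : ℕ) (lam : ℝ) (hlam : 0 < lam) :
    (∃ C : ℝ, 0 < C ∧ ∀ t ∈ Set.Ioc (0:ℝ) 1, ∀ h : EuclideanSpace ℝ (Fin d), ‖h‖ ≤ 1 →
      ∀ x : EuclideanSpace ℝ (Fin d),
      (∫ y : EuclideanSpace ℝ (Fin d),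
          Real.exp (Real.sqrt (1 + ‖x - h - y‖ ^ 2)) *
            (t ^ (-(d : ℝ) / 2) * Real.exp (-lam * ‖y‖ ^ 2 / t)))
        ≤ C * Real.exp (Real.sqrt (1 + ‖x‖ ^ 2))) ∧
    ∀ x : EuclideanSpace ℝ (Fin d),
      ‖fderiv ℝ (fun z : EuclideanSpace ℝ (Fin d) =>
          Real.exp (Real.sqrt (1 + ‖z‖ ^ 2))) x‖
        ≤ Real.exp (Real.sqrt (1 + ‖x‖ ^ 2)) := by
  refine ⟨⟨Real.exp (1 + 1 / (2 * lam)) * (2 * Real.pi / lam) ^ ((d : ℝ) / 2), by positivity,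
    fun t ht h hh x => ?_⟩, norm_fderiv_exp_sqrt_one_add_norm_sq_le⟩
  have hbound := integral_exp_sqrt_mul_heatKernel_le hlam ht.1 ht.2 hh x
  rwa [finrank_euclideanSpace_fin] at hbound

/-- For `d ≥ 1`, `λ > 0` and `φ(x) = exp(√(1+|x|²))`, there is
`C = C(d,λ) > 0` such that for all `t ∈ (0,1]`, `|h| ≤ 1`, `x ∈ ℝ^d`,
`∫ exp(√(1+|x−h−y|²)) ϱ_λ(t,y) dy ≤ C exp(√(1+|x|²))`; moreover `|∇φ(x)| ≤ φ(x)`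
for all `x`. -/
theorem stmt_9 (d : ℕ) (hd : 1 ≤ d) (lam : ℝ) (hlam : 0 < lam) :
    (∃ C : ℝ, 0 < C ∧ ∀ t ∈ Set.Ioc (0:ℝ) 1, ∀ h : EuclideanSpace ℝ (Fin d), ‖h‖ ≤ 1 →
      ∀ x : EuclideanSpace ℝ (Fin d),
      (∫ y : EuclideanSpace ℝ (Fin d),
          Real.exp (Real.sqrt (1 + ‖x - h - y‖ ^ 2)) *
            (t ^ (-(d : ℝ) / 2) * Real.exp (-lam * ‖y‖ ^ 2 / t)))
        ≤ C * Real.exp (Real.sqrt (1 + ‖x‖ ^ 2))) ∧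
    ∀ x : EuclideanSpace ℝ (Fin d),
      ‖fderiv ℝ (fun z : EuclideanSpace ℝ (Fin d) =>
          Real.exp (Real.sqrt (1 + ‖z‖ ^ 2))) x‖
        ≤ Real.exp (Real.sqrt (1 + ‖x‖ ^ 2)) :=
  stmt_9_general d lam hlam
end
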